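/- The graph Γ(5) is distance-transitive: for all vertices u, v, x, y of Γ(5) with d(u,v) = d(x,y), there exists an automorphism f of Γ(5) with f(u) = x and f(v) = y, where d denotes graph distance in Γ(5). -/

import Mathlib

/-- The connection set `S = {(i,0), (0,i), (i,i) : 1 ≤ i ≤ n-1}` of `ℤ_n × ℤ_n`. -/
def cayS (n : ℕ) : Set (ZMod n × ZMod n) :=
  {p | p ≠ 0 ∧ (p.2 = 0 ∨ p.1 = 0 ∨ p.1 = p.2)}

/-- The Cayley graph `Γ(n) = Cay(ℤ_n × ℤ_n; S)`. -/
def Gamma (n : ℕ) : SimpleGraph (ZMod n × ZMod n) where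
  Adj x y := x ≠ y ∧ x - y ∈ cayS n
  symm := ⟨by
    rintro x y ⟨hxy, hne, h⟩
    refine ⟨Ne.symm hxy, sub_ne_zero_of_ne (Ne.symm hxy), ?_⟩
    simp only [Prod.fst_sub, Prod.snd_sub] at h ⊢
    rcases h with h | h | h
    · exact Or.inl (by linear_combination -h)
    · exact Or.inr (Or.inl (by linear_combination -h))
    · exact Or.inr (Or.inr (by linear_combination -h))⟩
  loopless := ⟨fun x h => h.1 rfl⟩

/-!
Translations of `ℤ₅²` are automorphisms of `Γ(5)`, and so is every linear automorphism preserving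
`S`, which consists of the nonzero points of the three lines `y = 0`, `x = 0`, `x = y`. Scalars,
the coordinate swap and `(x, y) ↦ (-x, y - x)` preserve `S` and permute its three lines as `S₃`;
they also permute the other three lines `y = 2x`, `x = 2y`, `x = -y` transitively. So the
stabilizer of `S` has just three orbits: `{0}`, `S`, and the remaining nonzero points. In a
connected graph `d(u, v)` determines whether `u = v` and whether `u ~ v`, so `d(u, v) = d(x, y)`
puts `v - u` and `y - x` into the same orbit, and composing with translations finishes.
-/

open MulAction
open scoped Pointwise

theorem SimpleGraph.Connected.eq_iff_and_adj_iff_of_dist_eq {V : Type*} {G : SimpleGraph V}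
    (hG : G.Connected) {u v x y : V} (h : G.dist u v = G.dist x y) :
    (u = v ↔ x = y) ∧ (G.Adj u v ↔ G.Adj x y) := by
  rw [← hG.dist_eq_zero_iff, ← hG.dist_eq_zero_iff, ← SimpleGraph.dist_eq_one_iff_adj,
    ← SimpleGraph.dist_eq_one_iff_adj, h]
  exact ⟨Iff.rfl, Iff.rfl⟩

namespace cayS

variable {n : ℕ}

abbrev stabilizer (n : ℕ) : Subgroup ((ZMod n × ZMod n) ≃ₗ[ZMod n] (ZMod n × ZMod n)) :=
  MulAction.stabilizer _ (cayS n)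

theorem mem_stabilizer_of_forall {σ : (ZMod n × ZMod n) ≃ₗ[ZMod n] (ZMod n × ZMod n)}
    (h : ∀ p, σ p ∈ cayS n ↔ p ∈ cayS n) : σ ∈ stabilizer n := by
  refine mem_stabilizer_iff.mpr (Set.ext fun p => ?_)
  rw [Set.mem_smul_set_iff_inv_smul_mem, ← h, LinearEquiv.smul_def, ← LinearEquiv.mul_apply,
    mul_inv_cancel, LinearEquiv.coe_one, id]

theorem apply_mem_iff (σ : stabilizer n) {p : ZMod n × ZMod n} :
    σ.1 p ∈ cayS n ↔ p ∈ cayS n := by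
  have h := Set.smul_mem_smul_set_iff (a := σ.1) (s := cayS n) (x := p)
  rwa [mem_stabilizer_iff.mp σ.2] at h

theorem mem_orbit_of_apply_eq {σ : (ZMod n × ZMod n) ≃ₗ[ZMod n] (ZMod n × ZMod n)}
    (hσ : σ ∈ stabilizer n) {a b : ZMod n × ZMod n} (h : σ a = b) : b ∈ orbit (stabilizer n) a :=
  ⟨⟨σ, hσ⟩, h⟩

theorem smulOfUnit_mem_stabilizer (c : (ZMod n)ˣ) : LinearEquiv.smulOfUnit c ∈ stabilizer n := by
  refine mem_stabilizer_of_forall fun p => ?_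
  rw [show LinearEquiv.smulOfUnit c p = c • p from rfl]
  simp [cayS, Prod.ext_iff, smul_eq_zero_iff_eq]

theorem prodComm_mem_stabilizer : LinearEquiv.prodComm (ZMod n) _ _ ∈ stabilizer n := by
  refine mem_stabilizer_of_forall fun p => ?_
  simp [cayS, Prod.ext_iff]
  tauto

def swapFstDiag (n : ℕ) : (ZMod n × ZMod n) ≃ₗ[ZMod n] (ZMod n × ZMod n) where
  toFun p := (-p.1, p.2 - p.1)
  invFun p := (-p.1, p.2 - p.1)
  map_add' p q := by ext <;> simp only [Prod.fst_add, Prod.snd_add] <;> abel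
  map_smul' c p := by ext <;> simp [mul_sub]
  left_inv p := by ext <;> simp
  right_inv p := by ext <;> simp

@[simp]
theorem swapFstDiag_apply (p : ZMod n × ZMod n) : swapFstDiag n p = (-p.1, p.2 - p.1) := rfl

theorem swapFstDiag_mem_stabilizer : swapFstDiag n ∈ stabilizer n := by
  refine mem_stabilizer_of_forall fun p => ?_
  simp only [cayS, Set.mem_ofPred_eq, swapFstDiag_apply, ne_eq, Prod.ext_iff, Prod.fst_zero,
    Prod.snd_zero, neg_eq_zero, sub_eq_zero, eq_sub_iff_add_eq, neg_add_cancel]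
  grind

end cayS

namespace Gamma

variable {n : ℕ}

theorem adj_iff {x y : ZMod n × ZMod n} : (Gamma n).Adj x y ↔ y - x ∈ cayS n := by
  rw [(Gamma n).adj_comm]
  exact ⟨And.right, fun h => ⟨sub_ne_zero.mp h.1, h⟩⟩

theorem connected (n : ℕ) : (Gamma n).Connected := by
  have reachable_of_fst_or_snd_eq {x y : ZMod n × ZMod n} (h : x.1 = y.1 ∨ x.2 = y.2) :
      (Gamma n).Reachable x y := by
    by_cases hxy : x = y
    · exact hxy ▸ SimpleGraph.Reachable.refl x
    refine SimpleGraph.Adj.reachable (adj_iff.mpr ⟨sub_ne_zero.mpr (Ne.symm hxy), ?_⟩)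
    simp only [Prod.fst_sub, Prod.snd_sub, sub_eq_zero]
    tauto
  exact ⟨fun u v => (reachable_of_fst_or_snd_eq (x := u) (y := (u.1, v.2)) (Or.inl rfl)).trans
    (reachable_of_fst_or_snd_eq (y := v) (Or.inr rfl))⟩

def translate (a : ZMod n × ZMod n) : Gamma n ≃g Gamma n where
  toEquiv := Equiv.addRight a
  map_rel_iff' := by simp [adj_iff]

@[simp]
theorem translate_apply (a x : ZMod n × ZMod n) : translate a x = x + a := rfl

def ofStabilizer (σ : cayS.stabilizer n) : Gamma n ≃g Gamma n where
  toEquiv := σ.1.toEquiv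
  map_rel_iff' := by
    intro x y
    simp only [LinearEquiv.coe_toEquiv, adj_iff, ← map_sub, cayS.apply_mem_iff]

@[simp]
theorem ofStabilizer_apply (σ : cayS.stabilizer n) (x : ZMod n × ZMod n) :
    ofStabilizer σ x = σ.1 x := rfl

theorem exists_iso_of_sub_mem_orbit {u v x y : ZMod n × ZMod n}
    (h : y - x ∈ orbit (cayS.stabilizer n) (v - u)) :
    ∃ f : Gamma n ≃g Gamma n, f u = x ∧ f v = y := by
  obtain ⟨σ, hσ : σ.1 (v - u) = y - x⟩ := h
  refine ⟨(translate (-u)).trans ((ofStabilizer σ).trans (translate x)), ?_, ?_⟩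
  · simp
  · simp [← sub_eq_add_neg, hσ]

end Gamma

instance : Fact (Nat.Prime 5) := ⟨Nat.prime_five⟩

-- `2`, `1/2 = 3` and `-1` are the slopes of the three lines through `0` that `cayS 5` misses.
theorem zmod_five_eq_two_mul_or_eq_neg_of_ne : ∀ p q : ZMod 5, p ≠ 0 → q ≠ 0 → p ≠ q →
    q = 2 * p ∨ p = 2 * q ∨ p = -q := by
  decide

namespace cayS

theorem mem_orbit_one_zero {a : ZMod 5 × ZMod 5} (ha : a ∈ cayS 5) :
    a ∈ orbit (stabilizer 5) (1, 0) := by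
  obtain ⟨a₁, a₂⟩ := a
  obtain ⟨ha0, h | h | h⟩ := ha <;> simp only at h <;> subst h
  · have hc : a₁ ≠ 0 := by simpa using ha0
    exact mem_orbit_of_apply_eq (σ := .smulOfNeZero _ _ a₁ hc)
      (smulOfUnit_mem_stabilizer _) (by simp)
  · have hc : a₂ ≠ 0 := by simpa using ha0
    exact mem_orbit_of_apply_eq (σ := .prodComm _ _ _ * .smulOfNeZero _ _ a₂ hc)
      (mul_mem prodComm_mem_stabilizer (smulOfUnit_mem_stabilizer _)) (by simp)
  · have hc : -a₁ ≠ 0 := by simpa using ha0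
    exact mem_orbit_of_apply_eq (σ := swapFstDiag 5 * .smulOfNeZero _ _ (-a₁) hc)
      (mul_mem swapFstDiag_mem_stabilizer (smulOfUnit_mem_stabilizer _)) (by simp)

theorem mem_orbit_one_two {a : ZMod 5 × ZMod 5} (ha0 : a ≠ 0) (ha : a ∉ cayS 5) :
    a ∈ orbit (stabilizer 5) (1, 2) := by
  obtain ⟨a₁, a₂⟩ := a
  have h₁ : a₁ ≠ 0 := fun h => ha ⟨ha0, Or.inr (Or.inl h)⟩
  have h₂ : a₂ ≠ 0 := fun h => ha ⟨ha0, Or.inl h⟩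
  have h₁₂ : a₁ ≠ a₂ := fun h => ha ⟨ha0, Or.inr (Or.inr h)⟩
  obtain h | h | h := zmod_five_eq_two_mul_or_eq_neg_of_ne a₁ a₂ h₁ h₂ h₁₂ <;> subst h
  · exact mem_orbit_of_apply_eq (σ := .smulOfNeZero _ _ a₁ h₁)
      (smulOfUnit_mem_stabilizer _) (by simp [mul_comm])
  · exact mem_orbit_of_apply_eq (σ := .prodComm _ _ _ * .smulOfNeZero _ _ a₂ h₂)
      (mul_mem prodComm_mem_stabilizer (smulOfUnit_mem_stabilizer _)) (by simp [mul_comm])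
  · exact mem_orbit_of_apply_eq (σ := swapFstDiag 5 * .smulOfNeZero _ _ a₂ h₂)
      (mul_mem swapFstDiag_mem_stabilizer (smulOfUnit_mem_stabilizer _)) (by simp [mul_two])

theorem mem_orbit_of_eq_zero_iff_of_mem_iff {a b : ZMod 5 × ZMod 5} (h0 : a = 0 ↔ b = 0)
    (hS : a ∈ cayS 5 ↔ b ∈ cayS 5) : b ∈ orbit (stabilizer 5) a := by
  by_cases ha0 : a = 0
  · rw [ha0, h0.mp ha0]
    exact mem_orbit_self _
  by_cases haS : a ∈ cayS 5
  · rw [orbit_eq_iff.mpr (mem_orbit_one_zero haS)]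
    exact mem_orbit_one_zero (hS.mp haS)
  · rw [orbit_eq_iff.mpr (mem_orbit_one_two ha0 haS)]
    exact mem_orbit_one_two (h0.not.mp ha0) (hS.not.mp haS)

end cayS

/-- The graph `Γ(5)` is distance-transitive. -/
theorem Gamma5_distance_transitive :
    ∀ u v x y : ZMod 5 × ZMod 5, (Gamma 5).dist u v = (Gamma 5).dist x y →
      ∃ f : Gamma 5 ≃g Gamma 5, f u = x ∧ f v = y := by
  intro u v x y h
  obtain ⟨heq, hadj⟩ := (Gamma.connected 5).eq_iff_and_adj_iff_of_dist_eq h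
  refine Gamma.exists_iso_of_sub_mem_orbit (cayS.mem_orbit_of_eq_zero_iff_of_mem_iff ?_ ?_)
  · rw [sub_eq_zero, sub_eq_zero, eq_comm, heq, eq_comm]
  · rwa [← Gamma.adj_iff, ← Gamma.adj_iff]
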